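/- With A and J the n×n complex matrices defined in the context, one has J·A = A, A·J = A, and A³ = −A. -/

import Mathlib

/-!
Write `c = v` as a column and `r = v*` as a row, and let `s = v*v`. Then the blocks of `A` and `J`
are `z`, `-r`, `c`, `-(z/s) c r` and `1`, `0`, `0`, `s⁻¹ c r`, and the three identities are
block computations using only `r c = s` and `z² = s - 1`; the latter holds because `z̄ = -z` turns
`|z|² + s = 1` into `-z² + s = 1`.
-/

open Matrix

namespace Matrix

variable {K ι m : Type*} [Field K] [Fintype m] [DecidableEq ι]

theorem replicateRow_mul_replicateCol_eq_smul_one [Unique ι] (w v : m → K) :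
    replicateRow ι w * replicateCol ι v = (w ⬝ᵥ v) • 1 := by
  ext i j
  simp [Subsingleton.elim i j]

variable [Fintype ι]

def skewBlock (z s : K) (c : Matrix m ι K) (r : Matrix ι m K) : Matrix (ι ⊕ m) (ι ⊕ m) K :=
  fromBlocks (z • 1) (-r) c (-(z / s) • (c * r))

def projBlock (s : K) (c : Matrix m ι K) (r : Matrix ι m K) : Matrix (ι ⊕ m) (ι ⊕ m) K :=
  fromBlocks 1 0 0 (s⁻¹ • (c * r))

variable {z s : K} {c : Matrix m ι K} {r : Matrix ι m K}

theorem mul_mul_of_mul_eq_smul_one {k : Type*} (hrc : r * c = s • 1) (X : Matrix ι k K) :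
    r * (c * X) = s • X := by
  rw [← Matrix.mul_assoc, hrc, Matrix.smul_mul, Matrix.one_mul]

theorem projBlock_mul_skewBlock (hs : s ≠ 0) (hrc : r * c = s • 1) :
    projBlock s c r * skewBlock z s c r = skewBlock z s c r := by
  simp only [projBlock, skewBlock, fromBlocks_multiply, Matrix.mul_assoc, hrc,
    mul_mul_of_mul_eq_smul_one hrc, Matrix.smul_mul, Matrix.mul_smul, Matrix.mul_neg,
    Matrix.mul_one, Matrix.one_mul, Matrix.zero_mul, add_zero, smul_smul]
  congr 1 <;> match_scalars <;> field_simp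

theorem skewBlock_mul_projBlock (hs : s ≠ 0) (hrc : r * c = s • 1) :
    skewBlock z s c r * projBlock s c r = skewBlock z s c r := by
  simp only [projBlock, skewBlock, fromBlocks_multiply, Matrix.mul_assoc,
    mul_mul_of_mul_eq_smul_one hrc, Matrix.smul_mul, Matrix.mul_smul, Matrix.neg_mul,
    Matrix.mul_one, Matrix.mul_zero, add_zero, zero_add, smul_smul]
  congr 1 <;> match_scalars <;> field_simp

theorem skewBlock_mul_self (hs : s ≠ 0) (hrc : r * c = s • 1) (hz : z * z = s - 1) :
    skewBlock z s c r * skewBlock z s c r = -projBlock s c r := by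
  simp only [projBlock, skewBlock, fromBlocks_multiply, Matrix.mul_assoc, hrc,
    mul_mul_of_mul_eq_smul_one hrc, Matrix.smul_mul, Matrix.mul_smul, Matrix.neg_mul,
    Matrix.mul_neg, Matrix.mul_one, Matrix.one_mul, smul_smul, fromBlocks_neg]
  congr 1 <;> match_scalars <;> field_simp
  · linear_combination hz
  · ring
  · ring
  · linear_combination hz

theorem skewBlock_pow_three [DecidableEq m] (hs : s ≠ 0) (hrc : r * c = s • 1)
    (hz : z * z = s - 1) : skewBlock z s c r ^ 3 = -skewBlock z s c r := by
  rw [pow_succ, sq, skewBlock_mul_self hs hrc hz, Matrix.neg_mul, projBlock_mul_skewBlock hs hrc]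

theorem fromBlocks_eq_skewBlock (z : K) (v w : m → K) :
    fromBlocks (of fun _ _ => z) (of fun _ j => -w j) (of fun i _ => v i)
      (of fun i j => -(v i * z * w j) / (w ⬝ᵥ v)) =
    skewBlock z (w ⬝ᵥ v) (replicateCol (Fin 1) v) (replicateRow (Fin 1) w) := by
  rw [skewBlock]
  congr 1 <;> ext i j
  · simp [Subsingleton.elim i j]
  · simp only [of_apply, Matrix.smul_apply, mul_apply, Finset.univ_unique, Fin.default_eq_zero,
      replicateCol_apply, replicateRow_apply, Finset.sum_const, Finset.card_singleton, one_smul,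
      smul_eq_mul]
    ring

theorem fromBlocks_eq_projBlock (v w : m → K) :
    fromBlocks 1 0 0 (of fun i j => v i * w j / (w ⬝ᵥ v)) =
    projBlock (w ⬝ᵥ v) (replicateCol (Fin 1) v) (replicateRow (Fin 1) w) := by
  rw [projBlock]
  congr 1
  ext i j
  simp only [of_apply, Matrix.smul_apply, mul_apply, Finset.univ_unique, Fin.default_eq_zero,
    replicateCol_apply, replicateRow_apply, Finset.sum_const, Finset.card_singleton, one_smul,
    smul_eq_mul]
  ring

end Matrix

theorem stmt_2 (n : ℕ) (z : ℂ) (hz : z + starRingEnd ℂ z = 0)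
    (v : Fin (n - 1) → ℂ) (hv : v ≠ 0)
    (hnorm : z * starRingEnd ℂ z + ∑ i, starRingEnd ℂ (v i) * v i = 1)
    (A J : Matrix (Fin 1 ⊕ Fin (n - 1)) (Fin 1 ⊕ Fin (n - 1)) ℂ)
    (hA : A = Matrix.fromBlocks
      (Matrix.of fun _ _ => z)
      (Matrix.of fun _ j => -starRingEnd ℂ (v j))
      (Matrix.of fun i _ => v i)
      (Matrix.of fun i j =>
        -(v i * z * starRingEnd ℂ (v j)) / (∑ k, starRingEnd ℂ (v k) * v k)))
    (hJ : J = Matrix.fromBlocks 1 0 0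
      (Matrix.of fun i j =>
        v i * starRingEnd ℂ (v j) / (∑ k, starRingEnd ℂ (v k) * v k))) :
    J * A = A ∧ A * J = A ∧ A ^ 3 = -A := by
  have hs : star v ⬝ᵥ v ≠ 0 := by
    open scoped ComplexOrder in exact dotProduct_star_self_eq_zero.not.mpr hv
  have hz2 : z * z = star v ⬝ᵥ v - 1 := by
    change _ + star v ⬝ᵥ v = 1 at hnorm
    linear_combination z * hz - hnorm
  have hrc := replicateRow_mul_replicateCol_eq_smul_one (ι := Fin 1) (star v) v
  rw [hA.trans (fromBlocks_eq_skewBlock z v (star v)),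
    hJ.trans (fromBlocks_eq_projBlock v (star v))]
  exact ⟨projBlock_mul_skewBlock hs hrc, skewBlock_mul_projBlock hs hrc,
    skewBlock_pow_three hs hrc hz2⟩
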